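/- arXiv:0711.2123 — 3 statements merged into one kernel-verified Lean document; each statement's English description precedes it below -/
import Mathlib

section
/- For every real number s > 1 there exist constants 0 < c ≤ C (depending only on s) such that for every integer n ≥ 1: c·n^{2-2s} ≤ Σ_{N=n}^∞ Σ_{k=1}^∞ (N² + k²)^{-s} ≤ C·n^{2-2s}. -/
/-!
Bounding `N² + k² ≥ (N + k)² / 2` and comparing with integrals of `x ^ (-p)`, the inner sum over
`k` is `O(N ^ (1 - 2s))` and the outer sum over `N ≥ n` is then `O(n ^ (2 - 2s))`. Conversely the
`n²` terms with `n ≤ N < 2n` and `k ≤ n` are each at least `(5n²) ^ (-s)`.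
-/

open Real Finset

section RpowTail

variable {a p : ℝ}

lemma sum_range_add_succ_rpow_neg_le (ha : 0 < a) (hp : 1 < p) (m : ℕ) :
    ∑ j ∈ range m, (a + (j + 1)) ^ (-p) ≤ a ^ (1 - p) / (p - 1) := by
  have hanti : AntitoneOn (fun x : ℝ => x ^ (-p)) (Set.Icc a (a + m)) :=
    fun x hx y _ hxy => rpow_le_rpow_of_nonpos (ha.trans_le hx.1) hxy (by linarith)
  have hzero : (0 : ℝ) ∉ Set.uIcc a (a + m) := by
    rw [Set.uIcc_of_le (by simp)]
    exact fun h => ha.not_ge h.1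
  calc ∑ j ∈ range m, (a + (j + 1)) ^ (-p)
      = ∑ j ∈ range m, (a + ((j + 1 : ℕ) : ℝ)) ^ (-p) := by push_cast; rfl
    _ ≤ ∫ x in a..a + m, x ^ (-p) := hanti.sum_le_integral
    _ = (a ^ (1 - p) - (a + m) ^ (1 - p)) / (p - 1) := by
      rw [integral_rpow (Or.inr ⟨by linarith, hzero⟩), show -p + 1 = 1 - p by ring,
        ← neg_div_neg_eq, neg_sub, neg_sub]
    _ ≤ a ^ (1 - p) / (p - 1) := by
      gcongr
      exact sub_le_self _ (by positivity)

lemma summable_add_succ_rpow_neg (ha : 0 < a) (hp : 1 < p) :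
    Summable fun j : ℕ => (a + (j + 1)) ^ (-p) :=
  summable_of_sum_range_le (fun _ => by positivity) (sum_range_add_succ_rpow_neg_le ha hp)

lemma tsum_add_succ_rpow_neg_le (ha : 0 < a) (hp : 1 < p) :
    ∑' j : ℕ, (a + (j + 1)) ^ (-p) ≤ a ^ (1 - p) / (p - 1) :=
  tsum_le_of_sum_range_le (fun _ => by positivity) (sum_range_add_succ_rpow_neg_le ha hp)

lemma summable_add_rpow_neg (ha : 0 < a) (hp : 1 < p) :
    Summable fun j : ℕ => (a + j) ^ (-p) :=
  (summable_nat_add_iff 1).1 (by simpa using summable_add_succ_rpow_neg ha hp)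

lemma tsum_add_rpow_neg_le (ha : 1 ≤ a) (hp : 1 < p) :
    ∑' j : ℕ, (a + j) ^ (-p) ≤ p / (p - 1) * a ^ (1 - p) := by
  have ha0 : 0 < a := by linarith
  rw [(summable_add_rpow_neg ha0 hp).tsum_eq_zero_add]
  push_cast
  calc (a + 0) ^ (-p) + ∑' j : ℕ, (a + (j + 1)) ^ (-p)
      ≤ a ^ (1 - p) + a ^ (1 - p) / (p - 1) :=
        add_le_add (by simpa using rpow_le_rpow_of_exponent_le ha (by linarith : -p ≤ 1 - p))
          (tsum_add_succ_rpow_neg_le ha0 hp)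
    _ = p / (p - 1) * a ^ (1 - p) := by field_simp [(by linarith : p - 1 ≠ 0)]; ring

end RpowTail

section LatticeSum

variable {s a : ℝ}

lemma sq_add_sq_rpow_neg_le {x y : ℝ} (hs : 0 ≤ s) (hxy : 0 < x + y) :
    (x ^ 2 + y ^ 2) ^ (-s) ≤ 2 ^ s * (x + y) ^ (-(2 * s)) :=
  calc (x ^ 2 + y ^ 2) ^ (-s)
      ≤ ((x + y) ^ 2 / 2) ^ (-s) :=
        rpow_le_rpow_of_nonpos (by positivity) (by nlinarith [sq_nonneg (x - y)]) (by linarith)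
    _ = 2 ^ s * (x + y) ^ (-(2 * s)) := by
      rw [div_rpow (by positivity) zero_le_two, rpow_neg zero_le_two, ← rpow_natCast,
        ← rpow_mul hxy.le, div_inv_eq_mul, mul_comm]
      norm_num

lemma sq_add_succ_sq_rpow_neg_le (ha : 0 < a) (hs : 0 ≤ s) (k : ℕ) :
    (a ^ 2 + ((k : ℝ) + 1) ^ 2) ^ (-s) ≤ 2 ^ s * (a + (k + 1)) ^ (-(2 * s)) :=
  sq_add_sq_rpow_neg_le hs (by positivity)

lemma summable_sq_add_succ_sq_rpow_neg (ha : 0 < a) (hs : 1 / 2 < s) :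
    Summable fun k : ℕ => (a ^ 2 + ((k : ℝ) + 1) ^ 2) ^ (-s) :=
  .of_nonneg_of_le (fun _ => by positivity) (sq_add_succ_sq_rpow_neg_le ha (by linarith))
    ((summable_add_succ_rpow_neg ha (by linarith)).mul_left _)

lemma tsum_sq_add_succ_sq_rpow_neg_le (ha : 0 < a) (hs : 1 / 2 < s) :
    ∑' k : ℕ, (a ^ 2 + ((k : ℝ) + 1) ^ 2) ^ (-s) ≤ 2 ^ s / (2 * s - 1) * a ^ (-(2 * s - 1)) :=
  calc ∑' k : ℕ, (a ^ 2 + ((k : ℝ) + 1) ^ 2) ^ (-s)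
      ≤ ∑' k : ℕ, 2 ^ s * (a + (k + 1)) ^ (-(2 * s)) :=
        (summable_sq_add_succ_sq_rpow_neg ha hs).tsum_le_tsum
          (sq_add_succ_sq_rpow_neg_le ha (by linarith))
          ((summable_add_succ_rpow_neg ha (by linarith)).mul_left _)
    _ ≤ 2 ^ s * (a ^ (1 - 2 * s) / (2 * s - 1)) := by
      rw [tsum_mul_left]
      gcongr
      exact tsum_add_succ_rpow_neg_le ha (by linarith)
    _ = 2 ^ s / (2 * s - 1) * a ^ (-(2 * s - 1)) := by rw [neg_sub', sub_neg_eq_add]; ring_nf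

/-- The tail `∑_{N ≥ a} ∑_{k ≥ 1} (N² + k²) ^ (-s)`, with `N = a + j` and `k` shifted by one. -/
noncomputable def latticeTail (s a : ℝ) : ℝ :=
  ∑' j : ℕ, ∑' k : ℕ, ((a + j) ^ 2 + ((k : ℝ) + 1) ^ 2) ^ (-s)

lemma summable_latticeTail (ha : 0 < a) (hs : 1 < s) :
    Summable fun j : ℕ => ∑' k : ℕ, ((a + j) ^ 2 + ((k : ℝ) + 1) ^ 2) ^ (-s) :=
  .of_nonneg_of_le (fun _ => tsum_nonneg fun _ => by positivity)
    (fun j => tsum_sq_add_succ_sq_rpow_neg_le (by positivity) (by linarith))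
    ((summable_add_rpow_neg ha (by linarith)).mul_left _)

lemma latticeTail_le (ha : 1 ≤ a) (hs : 1 < s) :
    latticeTail s a ≤ 2 ^ s / (2 * s - 2) * a ^ (2 - 2 * s) := by
  have ha0 : 0 < a := by linarith
  calc latticeTail s a
      ≤ ∑' j : ℕ, 2 ^ s / (2 * s - 1) * (a + j) ^ (-(2 * s - 1)) :=
        (summable_latticeTail ha0 hs).tsum_le_tsum
          (fun j => tsum_sq_add_succ_sq_rpow_neg_le (by positivity) (by linarith))
          ((summable_add_rpow_neg ha0 (by linarith)).mul_left _)
    _ ≤ 2 ^ s / (2 * s - 1) * ((2 * s - 1) / (2 * s - 1 - 1) * a ^ (1 - (2 * s - 1))) := by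
      rw [tsum_mul_left]
      gcongr
      · exact div_nonneg (by positivity) (by linarith)
      · exact tsum_add_rpow_neg_le ha (by linarith)
    _ = 2 ^ s / (2 * s - 2) * a ^ (2 - 2 * s) := by
      rw [show 1 - (2 * s - 1) = 2 - 2 * s by ring, show 2 * s - 1 - 1 = 2 * s - 2 by ring]
      field_simp [(by linarith : 2 * s - 1 ≠ 0)]

lemma rpow_neg_le_sq_add_succ_sq_rpow_neg {n j k : ℕ} (hj : j < n) (hk : k < n) (hs : 0 ≤ s) :
    5 ^ (-s) * (n : ℝ) ^ (-(2 * s)) ≤ (((n : ℝ) + j) ^ 2 + ((k : ℝ) + 1) ^ 2) ^ (-s) := by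
  have hj' : (j : ℝ) + 1 ≤ n := by exact_mod_cast hj
  have hk' : (k : ℝ) + 1 ≤ n := by exact_mod_cast hk
  calc 5 ^ (-s) * (n : ℝ) ^ (-(2 * s))
      = (5 * (n : ℝ) ^ 2) ^ (-s) := by
        rw [mul_rpow (by norm_num) (by positivity), ← rpow_natCast, ← rpow_mul (by positivity)]
        norm_num
    _ ≤ (((n : ℝ) + j) ^ 2 + ((k : ℝ) + 1) ^ 2) ^ (-s) :=
        rpow_le_rpow_of_nonpos (by positivity) (by nlinarith) (by linarith)

lemma five_rpow_neg_mul_le_latticeTail {n : ℕ} (hn : 1 ≤ n) (hs : 1 < s) :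
    5 ^ (-s) * (n : ℝ) ^ (2 - 2 * s) ≤ latticeTail s n := by
  have hn0 : (0 : ℝ) < n := by exact_mod_cast hn
  have hterm : ∀ j ∈ range n, ∀ k ∈ range n, 5 ^ (-s) * (n : ℝ) ^ (-(2 * s)) ≤
      (((n : ℝ) + j) ^ 2 + ((k : ℝ) + 1) ^ 2) ^ (-s) := fun j hj k hk =>
    rpow_neg_le_sq_add_succ_sq_rpow_neg (mem_range.1 hj) (mem_range.1 hk) (by linarith)
  calc 5 ^ (-s) * (n : ℝ) ^ (2 - 2 * s)
      = n • n • (5 ^ (-s) * (n : ℝ) ^ (-(2 * s))) := by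
        rw [nsmul_eq_mul, nsmul_eq_mul, show 2 - 2 * s = -(2 * s) + 1 + 1 by ring,
          rpow_add_one hn0.ne', rpow_add_one hn0.ne']
        ring
    _ ≤ ∑ j ∈ range n, ∑ k ∈ range n, (((n : ℝ) + j) ^ 2 + ((k : ℝ) + 1) ^ 2) ^ (-s) := by
        simpa using card_nsmul_le_sum _ _ _ fun j hj => card_nsmul_le_sum _ _ _ (hterm j hj)
    _ ≤ ∑ j ∈ range n, ∑' k : ℕ, (((n : ℝ) + j) ^ 2 + ((k : ℝ) + 1) ^ 2) ^ (-s) :=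
        sum_le_sum fun j _ => (summable_sq_add_succ_sq_rpow_neg (by positivity)
          (by linarith)).sum_le_tsum _ fun _ _ => by positivity
    _ ≤ latticeTail s n :=
        (summable_latticeTail hn0 hs).sum_le_tsum _ fun _ _ => tsum_nonneg fun _ => by positivity

end LatticeSum

/-- For every real `s > 1` there exist constants `0 < c ≤ C` (depending only on `s`)
such that for every integer `n ≥ 1`:
`c·n^(2-2s) ≤ Σ_{N=n}^∞ Σ_{k=1}^∞ (N² + k²)^(-s) ≤ C·n^(2-2s)`.
Here `N ≥ n` is encoded as `N = n + j`, `j : ℕ`, and `k ≥ 1` as `k + 1`. -/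
theorem stmt_2 (s : ℝ) (hs : 1 < s) :
    ∃ c C : ℝ, 0 < c ∧ c ≤ C ∧
      ∀ n : ℕ, 1 ≤ n →
        c * (n : ℝ) ^ (2 - 2 * s) ≤
            (∑' (j : ℕ), ∑' (k : ℕ),
              (((n : ℝ) + j) ^ 2 + ((k : ℝ) + 1) ^ 2) ^ (-s)) ∧
          (∑' (j : ℕ), ∑' (k : ℕ),
              (((n : ℝ) + j) ^ 2 + ((k : ℝ) + 1) ^ 2) ^ (-s)) ≤
            C * (n : ℝ) ^ (2 - 2 * s) := by
  have hbounds : ∀ n : ℕ, 1 ≤ n →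
      5 ^ (-s) * (n : ℝ) ^ (2 - 2 * s) ≤ latticeTail s n ∧
        latticeTail s n ≤ 2 ^ s / (2 * s - 2) * (n : ℝ) ^ (2 - 2 * s) := fun n hn =>
    ⟨five_rpow_neg_mul_le_latticeTail hn hs, latticeTail_le (by exact_mod_cast hn) hs⟩
  -- at `n = 1` both bounds reduce to the constants, so `c ≤ C` comes for free
  have hcC := (hbounds 1 le_rfl).1.trans (hbounds 1 le_rfl).2
  simp only [Nat.cast_one, one_rpow, mul_one] at hcC
  exact ⟨5 ^ (-s), 2 ^ s / (2 * s - 2), by positivity, hcC, hbounds⟩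
end

section
/- Let (X, d) be a separable metric space, let ν and m be finite Borel measures on X, let E ⊆ X be a Borel set, and let h > 0, c > 0, C > 0. Assume that for every z ∈ E and every δ > 0 there exists a radius r ∈ (0, δ) such that ν(closedBall(z, 4r)) ≤ C·r^h and m(closedBall(z, r)) ≥ c·r^h. Then there is a constant K depending only on the enlargement constant of the Vitali covering lemma such that ν(E) ≤ K·(C/c)·m(U) for every open set U containing E. -/
open MeasureTheory Metric Set

/-!
Choose for each `z ∈ E` a radius `r z ≤ 1` with `closedBall z (r z) ⊆ U` and both scaling bounds.
The Vitali covering lemma (enlargement factor `3/2`) extracts a pairwise disjoint subfamily of the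
balls `closedBall z (r z)`, countable by separability, whose `4`-fold enlargements cover `E`. Then
`ν E ≤ ∑ ν (closedBall b (4 r b)) ≤ (C/c) ∑ c (r b)^h ≤ (C/c) ∑ m (closedBall b (r b)) ≤ (C/c) m U`,
so `K = 1` works.
-/

theorem exists_countable_disjoint_closedBall_cover_four {X : Type*} [PseudoMetricSpace X]
    [TopologicalSpace.SeparableSpace X]
    (E : Set X) (r : X → ℝ) (hr_pos : ∀ z ∈ E, 0 < r z) (R : ℝ) (hr_le : ∀ z ∈ E, r z ≤ R) :
    ∃ u ⊆ E, u.Countable ∧ u.PairwiseDisjoint (fun z => closedBall z (r z)) ∧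
      E ⊆ ⋃ b ∈ u, closedBall b (4 * r b) := by
  obtain ⟨u, huE, hdisj, hcov⟩ := Vitali.exists_disjoint_subfamily_covering_enlargement
    (fun z => closedBall z (r z)) E r (3 / 2) (by norm_num) (fun z hz => (hr_pos z hz).le) R
    hr_le (fun z hz => nonempty_closedBall.2 (hr_pos z hz).le)
  refine ⟨u, huE, ?_, hdisj, fun z hz => ?_⟩
  · refine hdisj.countable_of_nonempty_interior fun b hb => ?_
    exact (nonempty_ball.2 (hr_pos b (huE hb))).mono
      (interior_maximal ball_subset_closedBall isOpen_ball)
  · obtain ⟨b, hbu, ⟨y, hzy, hby⟩, hrzb⟩ := hcov z hz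
    have hb_pos := hr_pos b (huE hbu)
    have hdist : dist z b ≤ r z + r b :=
      (dist_triangle z y b).trans (add_le_add (mem_closedBall'.1 hzy) (mem_closedBall.1 hby))
    exact mem_biUnion hbu (mem_closedBall.2 (by linarith))

theorem measure_le_mul_measure_of_disjoint_cover {X ι : Type*} [MeasurableSpace X]
    (ν m : Measure X) {E : Set X} {u : Set ι} (hu : u.Countable) {A B : ι → Set X}
    (hB_disj : u.PairwiseDisjoint B) (hB_meas : ∀ b ∈ u, MeasurableSet (B b))
    (hE : E ⊆ ⋃ b ∈ u, A b) (K : ENNReal) (w : ι → ENNReal)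
    (hA : ∀ b ∈ u, ν (A b) ≤ K * w b) (hB : ∀ b ∈ u, w b ≤ m (B b)) :
    ν E ≤ K * m (⋃ b ∈ u, B b) := by
  have := hu.to_subtype
  calc ν E ≤ ν (⋃ b ∈ u, A b) := measure_mono hE
    _ ≤ ∑' b : u, ν (A b) := measure_biUnion_le ν hu _
    _ ≤ ∑' b : u, K * w b := ENNReal.tsum_le_tsum fun b => hA b b.2
    _ = K * ∑' b : u, w b := ENNReal.tsum_mul_left
    _ ≤ K * ∑' b : u, m (B b) := by gcongr with b; exact hB b b.2
    _ = K * m (⋃ b ∈ u, B b) := by rw [measure_biUnion hu hB_disj hB_meas]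

theorem exists_radius_closedBall_subset_of_frequently {X : Type*} [PseudoMetricSpace X]
    {U : Set X} (hU : IsOpen U) {z : X} (hz : z ∈ U) {P : ℝ → Prop}
    (hP : ∀ δ : ℝ, 0 < δ → ∃ r ∈ Ioo 0 δ, P r) :
    ∃ r, 0 < r ∧ r ≤ 1 ∧ closedBall z r ⊆ U ∧ P r := by
  obtain ⟨ε, hε, hball⟩ := Metric.isOpen_iff.1 hU z hz
  obtain ⟨r, ⟨hr_pos, hr_lt⟩, hPr⟩ := hP (min 1 ε) (lt_min one_pos hε)
  exact ⟨r, hr_pos, (hr_lt.trans_le (min_le_left _ _)).le,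
    (closedBall_subset_ball (hr_lt.trans_le (min_le_right _ _))).trans hball, hPr⟩

theorem ENNReal.ofReal_mul_eq_ofReal_div_mul {C c x : ℝ} (hc : 0 < c) (hx : 0 ≤ x) :
    ENNReal.ofReal (C * x) = ENNReal.ofReal (C / c) * ENNReal.ofReal (c * x) := by
  rw [← ENNReal.ofReal_mul' (by positivity)]
  congr 1
  field_simp

/-- Covering comparison lemma: there is a universal constant `K > 0` (depending only on
the enlargement constant of the Vitali covering lemma) such that, for any separable
metric space `X`, finite Borel measures `ν`, `m` on `X`, Borel set `E ⊆ X` and reals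
`h, c, C > 0`, if for every `z ∈ E` and every `δ > 0` there is `r ∈ (0, δ)` with
`ν(closedBall(z,4r)) ≤ C·r^h` and `m(closedBall(z,r)) ≥ c·r^h`, then
`ν(E) ≤ K·(C/c)·m(U)` for every open `U ⊇ E`. -/
theorem stmt_8 :
    ∃ K : ℝ, 0 < K ∧
      ∀ (X : Type) [MetricSpace X] [TopologicalSpace.SeparableSpace X]
        [MeasurableSpace X] [BorelSpace X]
        (ν m : Measure X) [IsFiniteMeasure ν] [IsFiniteMeasure m]
        (E : Set X) (h c C : ℝ), MeasurableSet E → 0 < h → 0 < c → 0 < C →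
        (∀ z ∈ E, ∀ δ : ℝ, 0 < δ → ∃ r : ℝ, r ∈ Set.Ioo 0 δ ∧
          ν (Metric.closedBall z (4 * r)) ≤ ENNReal.ofReal (C * r ^ h) ∧
          ENNReal.ofReal (c * r ^ h) ≤ m (Metric.closedBall z r)) →
        ∀ U : Set X, IsOpen U → E ⊆ U →
          ν E ≤ ENNReal.ofReal (K * (C / c)) * m U := by
  refine ⟨1, one_pos, ?_⟩
  intro X _ _ _ _ ν m _ _ E h c C _ _ hc _ hscale U hU hEU
  have hradius : ∀ z ∈ E, ∃ ρ, 0 < ρ ∧ ρ ≤ 1 ∧ closedBall z ρ ⊆ U ∧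
      ν (closedBall z (4 * ρ)) ≤ ENNReal.ofReal (C * ρ ^ h) ∧
      ENNReal.ofReal (c * ρ ^ h) ≤ m (closedBall z ρ) := fun z hz =>
    exists_radius_closedBall_subset_of_frequently hU (hEU hz) (hscale z hz)
  choose! r hr_pos hr_le hr_sub hν hm using hradius
  obtain ⟨u, huE, hu, hdisj, hcov⟩ :=
    exists_countable_disjoint_closedBall_cover_four E r hr_pos 1 hr_le
  calc ν E ≤ ENNReal.ofReal (C / c) * m (⋃ b ∈ u, closedBall b (r b)) := by
        refine measure_le_mul_measure_of_disjoint_cover ν m hu hdisj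
          (fun _ _ => measurableSet_closedBall) hcov _ (fun b => ENNReal.ofReal (c * r b ^ h))
          (fun b hb => ?_) (fun b hb => hm b (huE hb))
        rw [← ENNReal.ofReal_mul_eq_ofReal_div_mul hc (Real.rpow_nonneg (hr_pos b (huE hb)).le h)]
        exact hν b (huE hb)
    _ ≤ ENNReal.ofReal (1 * (C / c)) * m U := by
        rw [one_mul]
        gcongr
        exact iUnion₂_subset fun b hb => hr_sub b (huE hb)
end

section
/- Let (X, F, μ) be a σ-finite measure space and T : X → X a conservative, measure-preserving transformation. Let (Γ_n)_{n≥0} be a sequence of pairwise disjoint measurable sets with μ(Γ_0) < ∞ and Γ_{n+1} ⊆ T^{-1}(Γ_n) for every n ≥ 0. Then the sequence (μ(Γ_n))_{n≥0} is non-increasing and lim_{n→∞} μ(Γ_n) = 0. -/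
/-!
A point of `Γ n` enters `Γ 0` for the first time at time `n`: the chain condition sends it into
`Γ 0` after `n` steps, and into `Γ (n - k) ≠ Γ 0` after `k < n` steps. For a measure-preserving
map and a set `s` of finite measure, the points first entering `s` at time `n` have the same
measure as the points of `s` that do not return to `s` within `n` steps, and by Poincaré
recurrence for conservative maps the latter sets decrease to a null set.
-/

open MeasureTheory Filter Set Topology
open scoped ENNReal

section Entrance

variable {α : Type*} (f : α → α) (s : Set α) (n : ℕ)

def hitWithin : Set α := ⋃ k < n, f^[k] ⁻¹' s

def firstEntrance : Set α := f^[n] ⁻¹' s \ hitWithin f s n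

def noReturnWithin : Set α := s \ f ⁻¹' hitWithin f s n

theorem hitWithin_succ : hitWithin f s (n + 1) = hitWithin f s n ∪ f^[n] ⁻¹' s :=
  biUnion_lt_succ _ n

theorem hitWithin_succ' : hitWithin f s (n + 1) = s ∪ f ⁻¹' hitWithin f s n := by
  simp only [hitWithin, biUnion_lt_succ', preimage_iUnion, ← preimage_comp,
    ← Function.iterate_succ, Function.iterate_zero, preimage_id]

theorem monotone_hitWithin : Monotone (hitWithin f s) := fun _ _ hmn =>
  biUnion_mono (fun _ hk => lt_of_lt_of_le hk hmn) fun _ _ => subset_rfl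

theorem antitone_noReturnWithin : Antitone (noReturnWithin f s) := fun _ _ hmn =>
  sdiff_subset_sdiff_right (preimage_mono (monotone_hitWithin f s hmn))

theorem iInter_noReturnWithin_subset :
    ⋂ n, noReturnWithin f s n ⊆ {x ∈ s | ∀ m ≥ 1, f^[m] x ∉ s} := by
  intro x hx
  rw [mem_iInter] at hx
  refine ⟨(hx 0).1, fun m hm hxm => ?_⟩
  obtain ⟨k, rfl⟩ := Nat.exists_eq_add_of_le' hm
  exact (hx (k + 1)).2 <| mem_iUnion₂.2 ⟨k, Nat.lt_succ_self k, by
    rwa [mem_preimage, ← Function.iterate_succ_apply]⟩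

end Entrance

namespace MeasureTheory

variable {α : Type*} [MeasurableSpace α] {μ : Measure α} {f : α → α} {s : Set α}

theorem measurableSet_hitWithin (hf : Measurable f) (hs : MeasurableSet s) (n : ℕ) :
    MeasurableSet (hitWithin f s n) :=
  .biUnion (to_countable _) fun k _ => hs.preimage (hf.iterate k)

theorem MeasurePreserving.measure_hitWithin_ne_top (hf : MeasurePreserving f μ μ)
    (hs : MeasurableSet s) (hμs : μ s ≠ ∞) (n : ℕ) : μ (hitWithin f s n) ≠ ∞ :=
  (measure_biUnion_lt_top (finite_Iio n) fun k _ =>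
    ((hf.iterate k).measure_preimage hs.nullMeasurableSet).trans_lt hμs.lt_top).ne

/-- Both sides equal `μ (hitWithin f s (n + 1)) - μ (hitWithin f s n)`, because the two sets
removed have the same measure. -/
theorem MeasurePreserving.measure_firstEntrance (hf : MeasurePreserving f μ μ)
    (hs : MeasurableSet s) (hμs : μ s ≠ ∞) (n : ℕ) :
    μ (firstEntrance f s n) = μ (noReturnWithin f s n) := by
  have hW := measurableSet_hitWithin hf.measurable hs n
  have hfW := hf.measure_preimage hW.nullMeasurableSet
  rw [firstEntrance, noReturnWithin, measure_sdiff' _ hW.nullMeasurableSet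
      (hf.measure_hitWithin_ne_top hs hμs n),
    measure_sdiff' _ (hW.preimage hf.measurable).nullMeasurableSet
      (hfW.trans_ne (hf.measure_hitWithin_ne_top hs hμs n)),
    hfW, union_comm, ← hitWithin_succ, ← hitWithin_succ']

theorem Conservative.tendsto_measure_noReturnWithin (hf : Conservative f μ)
    (hs : MeasurableSet s) (hμs : μ s ≠ ∞) :
    Tendsto (fun n => μ (noReturnWithin f s n)) atTop (𝓝 0) := by
  have hnull : μ (⋂ n, noReturnWithin f s n) = 0 :=
    measure_mono_null (iInter_noReturnWithin_subset f s)
      (hf.measure_mem_forall_ge_image_notMem_eq_zero hs.nullMeasurableSet 1)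
  rw [← hnull]
  refine tendsto_measure_iInter_atTop (fun n => ?_) (antitone_noReturnWithin f s) ⟨0, ?_⟩
  · exact (hs.diff ((measurableSet_hitWithin hf.measurable hs n).preimage
      hf.measurable)).nullMeasurableSet
  · exact ne_top_of_le_ne_top hμs (measure_mono sdiff_subset)

theorem Conservative.tendsto_measure_firstEntrance (hf : Conservative f μ)
    (hf' : MeasurePreserving f μ μ) (hs : MeasurableSet s) (hμs : μ s ≠ ∞) :
    Tendsto (fun n => μ (firstEntrance f s n)) atTop (𝓝 0) := by
  simpa only [hf'.measure_firstEntrance hs hμs] using hf.tendsto_measure_noReturnWithin hs hμs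

end MeasureTheory

section Chain

variable {α : Type*} {f : α → α} {Γ : ℕ → Set α}

theorem subset_preimage_iterate_of_succ_subset (hsub : ∀ n, Γ (n + 1) ⊆ f ⁻¹' Γ n) {k n : ℕ}
    (hk : k ≤ n) : Γ n ⊆ f^[k] ⁻¹' Γ (n - k) := by
  induction k with
  | zero => simp
  | succ k ih =>
    intro x hx
    have hx' : f^[k] x ∈ Γ (n - (k + 1) + 1) := by
      rw [show n - (k + 1) + 1 = n - k by omega]
      exact ih (by omega) hx
    rw [mem_preimage, Function.iterate_succ_apply']
    exact hsub _ hx'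

theorem subset_firstEntrance_of_succ_subset (hsub : ∀ n, Γ (n + 1) ⊆ f ⁻¹' Γ n)
    (hdisj : Pairwise (Function.onFun Disjoint Γ)) (n : ℕ) :
    Γ n ⊆ firstEntrance f (Γ 0) n := by
  intro x hx
  refine ⟨by simpa using subset_preimage_iterate_of_succ_subset hsub le_rfl hx, ?_⟩
  simp only [hitWithin, mem_iUnion₂, mem_preimage, not_exists]
  intro k hk hk0
  exact (hdisj (by omega : n - k ≠ 0)).le_bot
    ⟨subset_preimage_iterate_of_succ_subset hsub hk.le hx, hk0⟩

end Chain

theorem stmt_12_general {X : Type*} [MeasurableSpace X] (μ : Measure X)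
    (T : X → X) (hcons : MeasureTheory.Conservative T μ)
    (hpres : MeasureTheory.MeasurePreserving T μ μ)
    (Γ : ℕ → Set X) (hmeas : ∀ n, MeasurableSet (Γ n))
    (hdisj : Pairwise (Function.onFun Disjoint Γ))
    (hfin : μ (Γ 0) < ⊤) (hsub : ∀ n : ℕ, Γ (n + 1) ⊆ T ⁻¹' (Γ n)) :
    Antitone (fun n : ℕ => μ (Γ n)) ∧
      Filter.Tendsto (fun n : ℕ => μ (Γ n)) Filter.atTop (nhds 0) :=
  ⟨antitone_nat_of_succ_le fun n =>
      (measure_mono (hsub n)).trans_eq (hpres.measure_preimage (hmeas n).nullMeasurableSet),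
    tendsto_of_tendsto_of_tendsto_of_le_of_le tendsto_const_nhds
      (hcons.tendsto_measure_firstEntrance hpres (hmeas 0) hfin.ne) (fun _ => zero_le)
      fun n => measure_mono (subset_firstEntrance_of_succ_subset hsub hdisj n)⟩

/-- Let `(X,F,μ)` be a σ-finite measure space and `T : X → X` a conservative,
measure-preserving transformation.  If `(Γ_n)` are pairwise disjoint measurable sets
with `μ(Γ_0) < ∞` and `Γ_{n+1} ⊆ T⁻¹(Γ_n)` for all `n`, then `(μ(Γ_n))` is
non-increasing and tends to `0`. -/
theorem stmt_12 {X : Type*} [MeasurableSpace X] (μ : Measure X) [SigmaFinite μ]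
    (T : X → X) (hcons : MeasureTheory.Conservative T μ)
    (hpres : MeasureTheory.MeasurePreserving T μ μ)
    (Γ : ℕ → Set X) (hmeas : ∀ n, MeasurableSet (Γ n))
    (hdisj : Pairwise (Function.onFun Disjoint Γ))
    (hfin : μ (Γ 0) < ⊤) (hsub : ∀ n : ℕ, Γ (n + 1) ⊆ T ⁻¹' (Γ n)) :
    Antitone (fun n : ℕ => μ (Γ n)) ∧
      Filter.Tendsto (fun n : ℕ => μ (Γ n)) Filter.atTop (nhds 0) :=
  stmt_12_general μ T hcons hpres Γ hmeas hdisj hfin hsub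
end
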